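/- Let f : ℝⁿ → ℝ be a multivariate quartic polynomial. Then for every x ∈ ℝⁿ and t > 0, the derivative with respect to t of the gradient ∇_x μ_f satisfies ∇_{tx} μ_f(x,t) = (t/3)·Σ_{i=1}^n ∇f_{ii}(x), where f_{ii} := ∂²f/∂x_i². -/

import Mathlib

open MeasureTheory Matrix Filter

/-- Partial derivative of `f` in the `i`-th coordinate direction. -/
noncomputable def pd {n : ℕ} (i : Fin n) (f : (Fin n → ℝ) → ℝ) : (Fin n → ℝ) → ℝ :=
  fun x => fderiv ℝ f x (Pi.single i 1)

/-- The gradient of `f` at `x`, as a vector of first partial derivatives. -/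
noncomputable def grad {n : ℕ} (f : (Fin n → ℝ) → ℝ) (x : Fin n → ℝ) : Fin n → ℝ :=
  fun i => pd i f x

/-- The Hessian matrix of `f` at `x`, of second partial derivatives. -/
noncomputable def hess {n : ℕ} (f : (Fin n → ℝ) → ℝ) (x : Fin n → ℝ) :
    Matrix (Fin n) (Fin n) ℝ :=
  Matrix.of fun i j => pd i (pd j f) x

/-- The Steklov function `μ_f(x,t) = (1/(2t)^n) ∫_{x-t}^{x+t} ⋯ ∫ f`. -/
noncomputable def steklov {n : ℕ} (f : (Fin n → ℝ) → ℝ) (x : Fin n → ℝ) (t : ℝ) : ℝ :=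
  (1 / (2 * t) ^ n) * ∫ τ in Set.univ.pi (fun i => Set.Icc (x i - t) (x i + t)), f τ

/-- `f` is a multivariate quartic polynomial: a polynomial of total degree at most 4. -/
def IsMQP {n : ℕ} (f : (Fin n → ℝ) → ℝ) : Prop :=
  ∃ P : MvPolynomial (Fin n) ℝ, P.totalDegree ≤ 4 ∧ ∀ x, f x = MvPolynomial.eval x P

/-- The closed Euclidean (ℓ₂) ball of radius `L` centered at `0` in `ℝⁿ`. -/
def ball2 {n : ℕ} (L : ℝ) : Set (Fin n → ℝ) := {y | ∑ i, (y i) ^ 2 ≤ L ^ 2}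

/-- The Euclidean (ℓ₂) norm of a vector. -/
noncomputable def l2norm {m : ℕ} (v : Fin m → ℝ) : ℝ := Real.sqrt (∑ i, (v i) ^ 2)

/-! Differentiation in `x` commutes with Steklov averaging, so `∇ₓ μ_f = μ_{∇f}`, and every
partial derivative of a quartic is a cubic. For a cubic `g`, averaging over the cube
`[x - t, x + t]ⁿ` kills the odd moments and leaves `t² / 3` for each second moment, so
`μ_g(x, t) = g(x) + (t² / 6) Δg(x)` exactly; its `t`-derivative is `(t / 3) Δg(x)`, and
`Δ ∂ₖ f = Σᵢ ∂ₖ f_{ii}`. Both facts are checked on monomials, for which the Steklov average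
factors into one-dimensional averages of powers. -/

open MvPolynomial Finset

theorem Finset.prod_add_eq_of_pairwise_mul_eq_zero {ι R : Type*} [CommSemiring R] [DecidableEq ι]
    {s : Finset ι} {p q : ι → R} (hq : ∀ i ∈ s, ∀ j ∈ s, i ≠ j → q i * q j = 0) :
    ∏ i ∈ s, (p i + q i) = ∏ i ∈ s, p i + ∑ i ∈ s, q i * ∏ j ∈ s.erase i, p j := by
  induction s using Finset.induction_on with
  | empty => simp
  | @insert a s ha ih =>
    have hqa : ∀ i ∈ s, q a * (q i * ∏ j ∈ s.erase i, p j) = 0 := fun i hi => by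
      rw [← mul_assoc, hq a (mem_insert_self a s) i (mem_insert_of_mem hi)
        (by rintro rfl; exact ha hi), zero_mul]
    have herase : ∀ i ∈ s, ∏ j ∈ (insert a s).erase i, p j = p a * ∏ j ∈ s.erase i, p j :=
      fun i hi => by
        rw [erase_insert_of_ne (by rintro rfl; exact ha hi), prod_insert (by simp [ha])]
    rw [prod_insert ha, prod_insert ha, sum_insert ha, erase_insert ha,
      sum_congr rfl fun i hi => by rw [herase i hi],
      ih fun i hi j hj => hq i (mem_insert_of_mem hi) j (mem_insert_of_mem hj),
      add_mul, mul_add, mul_add, mul_sum s _ (q a), sum_eq_zero hqa, mul_sum]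
    simp only [mul_left_comm (p a)]
    ring

theorem MeasureTheory.setIntegral_univ_pi_prod {ι 𝕜 : Type*} [Fintype ι] [RCLike 𝕜]
    {E : ι → Type*} [∀ i, MeasureSpace (E i)] [∀ i, SigmaFinite (volume : Measure (E i))]
    (s : ∀ i, Set (E i)) (f : ∀ i, E i → 𝕜) :
    ∫ τ in Set.univ.pi s, ∏ i, f i (τ i) = ∏ i, ∫ u in s i, f i u := by
  rw [volume_pi, Measure.restrict_pi_pi, integral_fintype_prod_eq_prod]

namespace MvPolynomial

theorem pderiv_comm {σ R : Type*} [CommRing R] (i j : σ) (P : MvPolynomial σ R) :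
    pderiv i (pderiv j P) = pderiv j (pderiv i P) := by
  have h : ⁅pderiv i, pderiv j⁆ = (0 : Derivation R (MvPolynomial σ R) (MvPolynomial σ R)) :=
    derivation_ext fun k => by
      rw [Derivation.commutator_apply]
      classical
      simp only [pderiv_X, Pi.single_apply]
      split_ifs <;> simp
  have := congr($h P)
  rwa [Derivation.commutator_apply, Derivation.zero_apply, sub_eq_zero] at this

theorem totalDegree_pderiv_le {σ R : Type*} [CommSemiring R] (i : σ) (P : MvPolynomial σ R) :
    (pderiv i P).totalDegree ≤ P.totalDegree - 1 := by
  conv_lhs => rw [← sum_homogeneousComponent P, map_sum]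
  refine (totalDegree_finsetSum _ _).trans (Finset.sup_le fun k hk => ?_)
  have hk : k ≤ P.totalDegree := Nat.lt_succ_iff.mp (mem_range.mp hk)
  exact ((homogeneousComponent_isHomogeneous k P).pderiv.totalDegree_le).trans (by omega)

variable {σ : Type*} [Fintype σ]

theorem hasFDerivAt_eval (P : MvPolynomial σ ℝ) (y : σ → ℝ) :
    HasFDerivAt (fun z => eval z P)
      (∑ j, eval y (pderiv j P) • ContinuousLinearMap.proj (R := ℝ) (φ := fun _ => ℝ) j) y := by
  induction P using MvPolynomial.induction_on with
  | C a => simpa using hasFDerivAt_const a y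
  | add p q hp hq =>
    simp only [map_add, add_smul, sum_add_distrib]
    exact hp.add hq
  | mul_X p i hp =>
    classical
    have h := hp.mul (ContinuousLinearMap.proj (R := ℝ) (φ := fun _ => ℝ) i).hasFDerivAt
    simp only [eval_mul, eval_X]
    refine h.congr_fderiv (ContinuousLinearMap.ext fun v => ?_)
    simp [pderiv_X, Pi.single_apply, apply_ite, mul_add, sum_add_distrib, mul_sum, mul_comm,
      mul_left_comm]

theorem eval_pderiv_eq_sum {R : Type*} [CommSemiring R] (i : σ) (P : MvPolynomial σ R)
    (y : σ → R) :
    eval y (pderiv i P)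
      = ∑ d ∈ P.support, coeff d P * d i * ∏ j, y j ^ (d - Finsupp.single i 1 : σ →₀ ℕ) j := by
  conv_lhs => rw [P.as_sum]
  simp only [map_sum, pderiv_monomial, eval_monomial, Finsupp.prod_pow]

theorem eval_pderiv_pderiv_monomial {R : Type*} [CommSemiring R] [DecidableEq σ] (i : σ)
    (d : σ →₀ ℕ) (c : R) (y : σ → R) :
    eval y (pderiv i (pderiv i (monomial d c)))
      = c * ((d i * (d i - 1) : ℕ) : R) * y i ^ (d i - 2) * ∏ j ∈ univ.erase i, y j ^ d j := by
  have hcoord : ∀ j, (d - Finsupp.single i 1 - Finsupp.single i 1 : σ →₀ ℕ) j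
      = if j = i then d i - 2 else d j := fun j => by
    rcases eq_or_ne j i with rfl | hj
    · simp; omega
    · simp [Finsupp.single_eq_of_ne hj, hj]
  rw [pderiv_monomial, pderiv_monomial, eval_monomial, Finsupp.prod_pow,
    ← mul_prod_erase _ _ (mem_univ i), hcoord, if_pos rfl,
    prod_congr rfl fun j hj => by rw [hcoord, if_neg (ne_of_mem_erase hj)]]
  simp only [Finsupp.coe_tsub, Pi.sub_apply, Finsupp.single_eq_same]
  push_cast
  ring

end MvPolynomial

section Steklov

variable {n : ℕ}

theorem pd_eq_of_hasFDerivAt {F : (Fin n → ℝ) → ℝ} {g : Fin n → ℝ} {y : Fin n → ℝ}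
    (hF : HasFDerivAt F (∑ j, g j • ContinuousLinearMap.proj (R := ℝ) (φ := fun _ => ℝ) j) y)
    (i : Fin n) : pd i F y = g i := by
  simp [pd, hF.fderiv, Pi.single_apply]

theorem pd_eval (i : Fin n) (P : MvPolynomial (Fin n) ℝ) :
    pd i (fun z => eval z P) = fun y => eval y (pderiv i P) :=
  funext fun y => pd_eq_of_hasFDerivAt (hasFDerivAt_eval P y) i

/-- The mean of `s ^ k` over `[a - t, a + t]`. -/
noncomputable def avgPow (a t : ℝ) (k : ℕ) : ℝ :=
  ((a + t) ^ (k + 1) - (a - t) ^ (k + 1)) / (2 * t * (k + 1))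

theorem hasDerivAt_avgPow (a t : ℝ) (k : ℕ) :
    HasDerivAt (fun a => avgPow a t k) (k * avgPow a t (k - 1)) a := by
  have h := (((hasDerivAt_id a).add_const t).pow (k + 1)).sub
    (((hasDerivAt_id a).sub_const t).pow (k + 1)) |>.div_const (2 * t * (k + 1))
  refine h.congr_deriv ?_
  rcases k with _ | k
  · simp
  · simp only [avgPow, id, Nat.add_sub_cancel]
    push_cast
    rcases eq_or_ne t 0 with rfl | ht
    · simp
    · field_simp

theorem avgPow_of_le_three {k : ℕ} (hk : k ≤ 3) (a : ℝ) {t : ℝ} (ht : t ≠ 0) :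
    avgPow a t k = a ^ k + t ^ 2 / 6 * ((k * (k - 1) : ℕ) : ℝ) * a ^ (k - 2) := by
  interval_cases k <;> (simp only [avgPow]; field_simp; ring)

theorem hasFDerivAt_prod_avgPow (d : Fin n →₀ ℕ) (t : ℝ) (y : Fin n → ℝ) :
    HasFDerivAt (fun y => ∏ j, avgPow (y j) t (d j))
      (∑ j, (d j * ∏ k, avgPow (y k) t ((d - Finsupp.single j 1 : Fin n →₀ ℕ) k)) •
        ContinuousLinearMap.proj (R := ℝ) (φ := fun _ => ℝ) j) y := by
  have h := HasFDerivAt.finsetProd (u := univ) fun j _ =>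
    (hasDerivAt_avgPow (y j) t (d j)).comp_hasFDerivAt y
      (ContinuousLinearMap.proj (R := ℝ) (φ := fun _ => ℝ) j).hasFDerivAt
  refine h.congr_fderiv (sum_congr rfl fun j _ => ?_)
  have herase : ∀ k ∈ univ.erase j, (d - Finsupp.single j 1 : Fin n →₀ ℕ) k = d k :=
    fun k hk => by simp [Finsupp.single_eq_of_ne (ne_of_mem_erase hk)]
  rw [smul_smul]
  congr 1
  conv_rhs => rw [← mul_prod_erase _ _ (mem_univ j), prod_congr rfl fun k hk => by rw [herase k hk]]
  simp only [Function.comp_apply, ContinuousLinearMap.proj_apply, Finsupp.coe_tsub, Pi.sub_apply,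
    Finsupp.single_eq_same]
  ring

theorem prod_avgPow_of_sum_le_three {d : Fin n →₀ ℕ} (hd : ∑ i, d i ≤ 3) (y : Fin n → ℝ)
    {t : ℝ} (ht : t ≠ 0) :
    ∏ i, avgPow (y i) t (d i)
      = ∏ i, y i ^ d i + t ^ 2 / 6 * ∑ i, ((d i * (d i - 1) : ℕ) : ℝ) * y i ^ (d i - 2) *
          ∏ j ∈ univ.erase i, y j ^ d j := by
  have hle : ∀ i, d i ≤ 3 := fun i =>
    (single_le_sum (fun j _ => Nat.zero_le (d j)) (mem_univ i)).trans hd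
  -- two exponents `≥ 2` would already have degree `4`
  have hpair : ∀ i ∈ univ, ∀ j ∈ univ, i ≠ j →
      (t ^ 2 / 6 * ((d i * (d i - 1) : ℕ) : ℝ) * y i ^ (d i - 2)) *
        (t ^ 2 / 6 * ((d j * (d j - 1) : ℕ) : ℝ) * y j ^ (d j - 2)) = 0 := fun i hi j hj hij => by
    have := (add_le_sum (fun k _ => Nat.zero_le (d k)) hi hj hij).trans hd
    rcases (by omega : d i ≤ 1 ∨ d j ≤ 1) with h | h <;> simp [Nat.sub_eq_zero_of_le h]
  rw [prod_congr rfl fun i _ => avgPow_of_le_three (hle i) (y i) ht,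
    prod_add_eq_of_pairwise_mul_eq_zero hpair, mul_sum]
  simp only [mul_assoc]

theorem steklov_prod_pow (d : Fin n → ℕ) (x : Fin n → ℝ) {t : ℝ} (ht : 0 < t) :
    steklov (fun τ => ∏ i, τ i ^ d i) x t = ∏ i, avgPow (x i) t (d i) := by
  have hint : ∀ i, ∫ u in Set.Icc (x i - t) (x i + t), u ^ d i
      = ((x i + t) ^ (d i + 1) - (x i - t) ^ (d i + 1)) / (d i + 1) := fun i => by
    rw [integral_Icc_eq_integral_Ioc, ← intervalIntegral.integral_of_le (by linarith),
      integral_pow]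
  rw [steklov, setIntegral_univ_pi_prod _ fun i u => u ^ d i, prod_congr rfl fun i _ => hint i,
    show (2 * t) ^ n = ∏ _i : Fin n, 2 * t by simp, one_div, ← prod_inv_distrib,
    ← prod_mul_distrib]
  refine prod_congr rfl fun i _ => ?_
  rw [avgPow]
  field_simp

theorem steklov_sum_mul_prod_pow {κ : Type*} (s : Finset κ) (c : κ → ℝ) (e : κ → Fin n → ℕ)
    (x : Fin n → ℝ) {t : ℝ} (ht : 0 < t) :
    steklov (fun y => ∑ k ∈ s, c k * ∏ i, y i ^ e k i) x t
      = ∑ k ∈ s, c k * ∏ i, avgPow (x i) t (e k i) := by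
  have hbox : IsCompact (Set.univ.pi fun i => Set.Icc (x i - t) (x i + t)) :=
    isCompact_univ_pi fun i => isCompact_Icc
  rw [steklov, integral_finsetSum _ fun k _ =>
    (by fun_prop : Continuous _).continuousOn.integrableOn_compact hbox, mul_sum]
  refine sum_congr rfl fun k _ => ?_
  rw [integral_const_mul, mul_left_comm, ← steklov, steklov_prod_pow (e k) x ht]

theorem steklov_eval (P : MvPolynomial (Fin n) ℝ) (x : Fin n → ℝ) {t : ℝ} (ht : 0 < t) :
    steklov (fun y => eval y P) x t
      = ∑ d ∈ P.support, coeff d P * ∏ i, avgPow (x i) t (d i) := by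
  simp_rw [eval_eq']
  exact steklov_sum_mul_prod_pow _ _ (fun (d : Fin n →₀ ℕ) i => d i) x ht

theorem hasFDerivAt_steklov_eval (P : MvPolynomial (Fin n) ℝ) {t : ℝ} (ht : 0 < t)
    (y : Fin n → ℝ) :
    HasFDerivAt (fun y => steklov (fun z => eval z P) y t)
      (∑ j, steklov (fun z => eval z (pderiv j P)) y t •
        ContinuousLinearMap.proj (R := ℝ) (φ := fun _ => ℝ) j) y := by
  have hfun : (fun y => steklov (fun z => eval z P) y t)
      = ∑ d ∈ P.support, fun y => coeff d P * ∏ j, avgPow (y j) t (d j) :=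
    funext fun z => by simp [steklov_eval P z ht]
  have hpartial : ∀ j, steklov (fun z => eval z (pderiv j P)) y t
      = ∑ d ∈ P.support,
          coeff d P * d j * ∏ k, avgPow (y k) t ((d - Finsupp.single j 1 : Fin n →₀ ℕ) k) :=
    fun j => by
      simp_rw [eval_pderiv_eq_sum]
      exact steklov_sum_mul_prod_pow _ _ _ y ht
  rw [hfun]
  refine (HasFDerivAt.sum fun d _ =>
    (hasFDerivAt_prod_avgPow d t y).const_mul (coeff d P)).congr_fderiv ?_
  simp only [hpartial, smul_sum, smul_smul, sum_smul, mul_assoc]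
  exact sum_comm

theorem pd_steklov_eval (i : Fin n) (P : MvPolynomial (Fin n) ℝ) {t : ℝ} (ht : 0 < t) :
    pd i (fun y => steklov (fun z => eval z P) y t)
      = fun y => steklov (fun z => eval z (pderiv i P)) y t :=
  funext fun y => pd_eq_of_hasFDerivAt (hasFDerivAt_steklov_eval P ht y) i

theorem steklov_eval_of_totalDegree_le_three {Q : MvPolynomial (Fin n) ℝ}
    (hQ : Q.totalDegree ≤ 3) (y : Fin n → ℝ) {t : ℝ} (ht : 0 < t) :
    steklov (fun z => eval z Q) y t
      = eval y Q + t ^ 2 / 6 * ∑ i, eval y (pderiv i (pderiv i Q)) := by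
  have hdeg : ∀ d ∈ Q.support, ∑ i, d i ≤ 3 := fun d hd => by
    rw [← Finsupp.sum_fintype d (fun _ e => e) (fun _ => rfl)]
    exact (le_totalDegree hd).trans hQ
  rw [steklov_eval Q y ht]
  conv_rhs => rw [Q.as_sum]
  simp only [map_sum, eval_pderiv_pderiv_monomial, eval_monomial, Finsupp.prod_pow]
  rw [sum_comm, mul_sum, ← sum_add_distrib]
  refine sum_congr rfl fun d hd => ?_
  rw [prod_avgPow_of_sum_le_three (hdeg d hd) y ht.ne']
  simp only [mul_sum, mul_add]
  exact congrArg _ (sum_congr rfl fun i _ => by ring)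

end Steklov

/-- For a multivariate quartic polynomial `f`, the derivative with respect to `t` of the
gradient `∇ₓ μ_f` satisfies `∇ₜₓ μ_f(x,t) = (t/3) Σᵢ ∇f_{ii}(x)`. -/
theorem steklov_t_gradient {n : ℕ} (f : (Fin n → ℝ) → ℝ) (hf : IsMQP f)
    (x : Fin n → ℝ) (t : ℝ) (ht : 0 < t) :
    (fun i => deriv (fun s => grad (fun y => steklov f y s) x i) t)
      = (t / 3) • ∑ i, grad (pd i (pd i f)) x := by
  obtain ⟨P, hP, hfP⟩ := hf
  obtain rfl : f = fun y => eval y P := funext hfP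
  funext k
  set L := ∑ j, eval x (pderiv j (pderiv j (pderiv k P)))
  have hcubic : (pderiv k P).totalDegree ≤ 3 := (totalDegree_pderiv_le k P).trans (by omega)
  have hgrad : (fun s => grad (fun y => steklov (fun z => eval z P) y s) x k)
      =ᶠ[nhds t] fun s => eval x (pderiv k P) + s ^ 2 / 6 * L := by
    filter_upwards [Ioi_mem_nhds ht] with s hs
    rw [grad, pd_steklov_eval k P hs]
    exact steklov_eval_of_totalDegree_le_three hcubic x hs
  have hderiv : HasDerivAt (fun s => eval x (pderiv k P) + s ^ 2 / 6 * L) (t / 3 * L) t := by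
    refine ((((hasDerivAt_pow 2 t).div_const 6).mul_const L).const_add _).congr_deriv ?_
    push_cast
    ring
  rw [hgrad.deriv_eq, hderiv.deriv]
  simp [L, grad, pd_eval, pderiv_comm k, mul_sum]
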